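/- arXiv:0810.2088 — 9 statements merged into one kernel-verified Lean document; each statement's English description precedes it below -/
import Mathlib

section
/- Let R be a ring, let γ_1, …, γ_n be elements of R, and let (a_k^j)_{1≤k,j≤n} be elements of R that commute pairwise with each other and commute with every γ_i. Set T_k = Σ_{j=1}^n a_k^j γ_j for k = 1,…,n. Then [T_1, T_2, …, T_n] = Det(a)·[γ_1, γ_2, …, γ_n], where Det(a) = Σ_σ ε(σ) ∏_{k=1}^n a_k^{σ(k)} is the determinant of the matrix (a_k^j) (well defined since its entries commute). -/
/-!
Over a commutative ring `A` whose action on `B` is central, `[T_1, …, T_n]` is the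
alternatization of the `A`-multilinear map `(T_1, …, T_n) ↦ T_1 ⋯ T_n`; an alternating map sends
`(∑_j c_k^j γ_j)_k` to `det c` times its value at `γ`. In general, the `a_k^j` lie in the centre of
the centralizer `B` of all the `a_k^j`, and `B` contains every `γ_i`, so we may take
`A = center B`.
-/

/-- The multicommutator `[T_1, …, T_n] = Σ_σ ε(σ) T_{σ(1)} ⋯ T_{σ(n)}` of elements of a
(possibly noncommutative) ring. -/
noncomputable def multicom {R : Type*} [Ring R] {n : ℕ} (T : Fin n → R) : R :=
  ∑ σ : Equiv.Perm (Fin n), (Equiv.Perm.sign σ : ℤ) • (List.ofFn fun i => T (σ i)).prod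

open Equiv

theorem AlternatingMap.map_sum_smul_eq_det_smul {A M N : Type*} [CommRing A] [AddCommGroup M]
    [AddCommGroup N] [Module A M] [Module A N] {ι : Type*} [Fintype ι] [DecidableEq ι]
    (f : M [⋀^ι]→ₗ[A] N) (c : Matrix ι ι A) (v : ι → M) :
    f (fun k => ∑ j, c k j • v j) = c.det • f v := by
  let e := Pi.basisFun A ι
  have key : f.compLinearMap (Fintype.linearCombination A v) = e.det.smulRight (f v) := by
    refine e.ext_alternating fun σ hσ => ?_
    let τ : Perm ι := Equiv.ofBijective σ (Finite.injective_iff_bijective.1 hσ)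
    change (f.compLinearMap _) (e ∘ τ) = (e.det.smulRight (f v)) (e ∘ τ)
    rw [map_perm, map_perm, smulRight_apply, e.det_self, one_smul, compLinearMap_apply]
    simp [e]
  have key_c := DFunLike.congr_fun key (fun k => c k)
  rw [compLinearMap_apply, smulRight_apply, Pi.basisFun_det] at key_c
  simp only [Fintype.linearCombination_apply] at key_c
  exact key_c

theorem RingHom.map_det_eq_sum_sign_smul_ofFn_prod {A R : Type*} [CommRing A] [Ring R]
    (f : A →+* R) {n : ℕ} (c : Matrix (Fin n) (Fin n) A) :
    f c.det = ∑ σ : Perm (Fin n), (Perm.sign σ : ℤ) • (List.ofFn fun k => f (c k (σ k))).prod := by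
  rw [← Matrix.det_transpose, Matrix.det_apply, map_sum]
  refine Finset.sum_congr rfl fun σ _ => ?_
  rw [Units.smul_def, map_zsmul, ← List.prod_ofFn, map_list_prod, List.map_ofFn]
  rfl

theorem map_multicom {R S : Type*} [Ring R] [Ring S] (f : R →+* S) {n : ℕ} (T : Fin n → R) :
    f (multicom T) = multicom (f ∘ T) := by
  simp only [multicom, map_sum, map_zsmul, map_list_prod, List.map_ofFn]
  rfl

theorem multicom_eq_alternatization (A : Type*) {B : Type*} [CommRing A] [Ring B] [Algebra A B]
    {n : ℕ} (T : Fin n → B) :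
    multicom T = MultilinearMap.alternatization (MultilinearMap.mkPiAlgebraFin A n B) T := by
  simp only [multicom, MultilinearMap.alternatization_apply, MultilinearMap.domDomCongr_apply,
    MultilinearMap.mkPiAlgebraFin_apply, Units.smul_def]

theorem multicom_sum_smul {A B : Type*} [CommRing A] [Ring B] [Algebra A B] {n : ℕ}
    (c : Matrix (Fin n) (Fin n) A) (γ : Fin n → B) :
    multicom (fun k => ∑ j, c k j • γ j) = c.det • multicom γ := by
  simp only [multicom_eq_alternatization A]
  exact AlternatingMap.map_sum_smul_eq_det_smul _ c γ

/-- If the coefficients `a k j` commute pairwise with each other and with all the `γ i`, and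
`T_k = Σ_j a_k^j γ_j`, then `[T_1, …, T_n] = Det(a) · [γ_1, …, γ_n]`, where
`Det(a) = Σ_σ ε(σ) ∏_k a_k^{σ(k)}`. -/
theorem multicom_smul_det {R : Type*} [Ring R] {n : ℕ} (γ : Fin n → R)
    (a : Fin n → Fin n → R)
    (hcomm : ∀ k j k' j', Commute (a k j) (a k' j'))
    (hcommγ : ∀ k j i, Commute (a k j) (γ i)) :
    multicom (fun k => ∑ j, a k j * γ j) =
      (∑ σ : Equiv.Perm (Fin n),
          (Equiv.Perm.sign σ : ℤ) • (List.ofFn fun k => a k (σ k)).prod) * multicom γ := by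
  let B := Subring.centralizer (Set.range (Function.uncurry a))
  have ha : ∀ k j, a k j ∈ B := fun k j => by rintro _ ⟨⟨k', j'⟩, rfl⟩; exact hcomm k' j' k j
  have hγ : ∀ i, γ i ∈ B := fun i => by rintro _ ⟨⟨k, j⟩, rfl⟩; exact hcommγ k j i
  let c : Matrix (Fin n) (Fin n) (Subring.center B) := fun k j =>
    ⟨⟨a k j, ha k j⟩, Subring.mem_center_iff.2 fun g => Subtype.ext (g.2 _ ⟨(k, j), rfl⟩).symm⟩
  let γ' : Fin n → B := fun i => ⟨γ i, hγ i⟩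
  have hdet := (B.subtype.comp (Subring.center B).subtype).map_det_eq_sum_sign_smul_ofFn_prod c
  calc multicom (fun k => ∑ j, a k j * γ j)
      = B.subtype (multicom fun k => ∑ j, c k j • γ' j) := by
        rw [map_multicom]
        congr 1
        ext k
        simp only [Function.comp_apply, Algebra.smul_def, map_sum, Subring.subtype_apply,
          Subring.coe_mul]
        rfl
    _ = B.subtype (c.det • multicom γ') := by rw [multicom_sum_smul]
    _ = _ := by rw [Algebra.smul_def, map_mul, map_multicom]; exact congr($hdet * _)
end

section
/- Let R be a ring, let γ_1, …, γ_m be elements of R, and let (a_k^j), 1 ≤ k ≤ n, 1 ≤ j ≤ m, be elements of R that commute pairwise with each other and commute with every γ_i. Set T_k = Σ_{j=1}^m a_k^j γ_j for k = 1,…,n. Then [T_1, T_2, …, T_n] = Σ_F Det(a(F))·[γ_{j_1(F)}, …, γ_{j_n(F)}], where the sum is over all subsets F = {j_1(F) < j_2(F) < … < j_n(F)} of {1,…,m} with exactly n elements, a(F) is the n×n matrix obtained by restricting (a_k^j) to the columns j ∈ F (in increasing order), and Det(a(F)) = Σ_σ ε(σ) ∏_{k=1}^n a_k^{j_{σ(k)}(F)}.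 -/
/-!
Expanding every `T_k = Σ_j a_k^j γ_j` writes `[T_1, …, T_n]` as
`Σ_g (∏_k a_k^{g k}) · [γ_{g 1}, …, γ_{g n}]` over all maps `g : Fin n → Fin m`: the `a`'s
commute past the `γ`'s and among themselves, so after reindexing `g ↦ g ∘ σ` only the `γ`'s
carry the permutation. The multicommutator is the alternatization of the product map, hence
alternating: terms with non-injective `g` vanish, and an injective `g` is `j(F) ∘ τ` for a
unique `n`-subset `F` and permutation `τ`, contributing `ε(τ) · [γ_{j_1(F)}, …, γ_{j_n(F)}]`.
Collecting the signs for fixed `F` gives `Det(a(F))`.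
-/

open Equiv Finset Function

section ListProd

variable {M : Type*} [Monoid M] {n : ℕ}

theorem List.prod_ofFn_mul_of_commute (b c : Fin n → M) (h : ∀ k l, Commute (c k) (b l)) :
    (List.ofFn fun k => b k * c k).prod = (List.ofFn b).prod * (List.ofFn c).prod := by
  induction n with
  | zero => simp
  | succ n ih =>
    have hc : Commute (c 0) (List.ofFn fun k => b k.succ).prod :=
      Commute.list_prod_right _ _ fun y hy => by
        obtain ⟨i, rfl⟩ := List.mem_ofFn.1 hy
        exact h 0 _
    simp only [List.ofFn_succ, List.prod_cons,
      ih (fun k => b k.succ) (fun k => c k.succ) fun k l => h _ _]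
    rw [mul_assoc, ← mul_assoc (c 0), hc.eq, mul_assoc, mul_assoc]

theorem List.prod_ofFn_comp_perm_of_commute (b : Fin n → M) (hb : ∀ k l, Commute (b k) (b l))
    (τ : Equiv.Perm (Fin n)) : (List.ofFn fun k => b (τ k)).prod = (List.ofFn b).prod :=
  (Perm.ofFn_comp_perm τ b).prod_eq' (List.pairwise_ofFn.2 fun _ _ _ => hb _ _)

end ListProd

section SortedEnumeration

variable {α : Type*} [LinearOrder α] {n : ℕ}

theorem Finset.range_coe_orderIsoOfFin_comp_perm (F : Finset α) (hF : F.card = n)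
    (τ : Equiv.Perm (Fin n)) : Set.range (fun k => (F.orderIsoOfFin hF (τ k) : α)) = F := by
  simp only [coe_orderIsoOfFin_apply]
  exact (EquivLike.range_comp (F.orderEmbOfFin hF) τ).trans (F.range_orderEmbOfFin hF)

theorem Finset.injective_coe_orderIsoOfFin_comp_perm :
    Injective fun p : {F : Finset α // F.card = n} × Perm (Fin n) =>
      fun k => (p.1.1.orderIsoOfFin p.1.2 (p.2 k) : α) := by
  rintro ⟨⟨F, hF⟩, τ⟩ ⟨⟨F', hF'⟩, τ'⟩ h
  obtain rfl : F = F' := by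
    rw [← coe_inj, ← F.range_coe_orderIsoOfFin_comp_perm hF τ,
      ← F'.range_coe_orderIsoOfFin_comp_perm hF' τ']
    exact congrArg Set.range h
  obtain rfl : τ = τ' :=
    Equiv.ext fun k => (F.orderIsoOfFin hF).injective (Subtype.ext (congrFun h k))
  rfl

theorem Finset.exists_coe_orderIsoOfFin_comp_perm_eq {g : Fin n → α} (hg : Injective g) :
    ∃ (F : Finset α) (hF : F.card = n) (τ : Perm (Fin n)),
      (fun k => (F.orderIsoOfFin hF (τ k) : α)) = g := by
  classical
  set F := univ.image g
  have hF : F.card = n := by simp [F, card_image_of_injective _ hg]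
  let e := (F.orderIsoOfFin hF).symm
  have hmem : ∀ k, g k ∈ F := fun k => mem_image_of_mem g (mem_univ k)
  have hbij : Bijective fun k => e ⟨g k, hmem k⟩ :=
    Finite.injective_iff_bijective.1 fun k l hkl =>
      hg (congrArg Subtype.val (e.injective hkl))
  refine ⟨F, hF, Equiv.ofBijective _ hbij, funext fun k => ?_⟩
  simp [e]

theorem Fintype.sum_eq_sum_card_eq_sum_perm [Fintype α] {M : Type*} [AddCommMonoid M]
    (f : (Fin n → α) → M) (hf : ∀ g, ¬ Injective g → f g = 0) :
    ∑ g, f g = ∑ F : {F : Finset α // F.card = n}, ∑ τ : Perm (Fin n),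
      f fun k => (F.1.orderIsoOfFin F.2 (τ k) : α) := by
  rw [← Fintype.sum_prod_type']
  refine (sum_of_injective _ Finset.injective_coe_orderIsoOfFin_comp_perm _ _
    (fun g hg => hf g fun hinj => hg ?_) fun _ => rfl).symm
  obtain ⟨F, hF, τ, rfl⟩ := Finset.exists_coe_orderIsoOfFin_comp_perm_eq hinj
  exact ⟨(⟨F, hF⟩, τ), rfl⟩

end SortedEnumeration

section Multicom

variable {R : Type*} [Ring R] {n : ℕ}

theorem multicom_eq_alternatization_s3 (T : Fin n → R) :
    multicom T = (MultilinearMap.mkPiAlgebraFin ℤ n R).alternatization T := by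
  simp [multicom, MultilinearMap.alternatization_apply, Units.smul_def]

theorem multicom_eq_zero_of_not_injective {T : Fin n → R} (hT : ¬ Injective T) :
    multicom T = 0 := by
  rw [multicom_eq_alternatization_s3]
  exact AlternatingMap.map_eq_zero_of_not_injective _ T hT

theorem multicom_comp_perm (T : Fin n → R) (τ : Perm (Fin n)) :
    multicom (fun k => T (τ k)) = (Perm.sign τ : ℤ) • multicom T := by
  rw [multicom_eq_alternatization_s3, multicom_eq_alternatization_s3, ← Units.smul_def]
  exact AlternatingMap.map_perm _ T τ

theorem multicom_sum_mul {ι : Type*} [Fintype ι] (γ : ι → R) (a : Fin n → ι → R)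
    (hcomm : ∀ k j k' j', Commute (a k j) (a k' j'))
    (hcommγ : ∀ k j i, Commute (a k j) (γ i)) :
    multicom (fun k => ∑ j, a k j * γ j) =
      ∑ g : Fin n → ι, (List.ofFn fun k => a k (g k)).prod * multicom (fun k => γ (g k)) := by
  have hexpand : ∀ σ : Perm (Fin n), (List.ofFn fun k => ∑ j, a (σ k) j * γ j).prod =
      ∑ g : Fin n → ι,
        (List.ofFn fun k => a k (g k)).prod * (List.ofFn fun k => γ (g (σ k))).prod := by
    intro σ
    calc _ = ∑ h : Fin n → ι, (List.ofFn fun k => a (σ k) (h k) * γ (h k)).prod :=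
          (MultilinearMap.mkPiAlgebraFin ℤ n R).map_sum _
      _ = ∑ h : Fin n → ι,
            (List.ofFn fun k => a (σ k) (h k)).prod * (List.ofFn fun k => γ (h k)).prod :=
          sum_congr rfl fun h _ =>
            List.prod_ofFn_mul_of_commute _ _ fun _ _ => (hcommγ _ _ _).symm
      _ = ∑ g : Fin n → ι, (List.ofFn fun k => a (σ k) (g (σ k))).prod *
            (List.ofFn fun k => γ (g (σ k))).prod :=
          (Fintype.sum_equiv (arrowCongr σ.symm (Equiv.refl ι)) _ _ fun h => by simp).symm
      _ = _ := sum_congr rfl fun g _ => by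
          rw [List.prod_ofFn_comp_perm_of_commute (fun k => a k (g k))
            (fun _ _ => hcomm _ _ _ _)]
  simp_rw [multicom, hexpand, smul_sum, mul_sum, mul_smul_comm]
  exact sum_comm

end Multicom

/-- Rectangular case: if the coefficients `a k j` (`1 ≤ k ≤ n`, `1 ≤ j ≤ m`) commute pairwise
with each other and with all the `γ i`, and `T_k = Σ_{j=1}^m a_k^j γ_j`, then
`[T_1, …, T_n] = Σ_F Det(a(F)) · [γ_{j_1(F)}, …, γ_{j_n(F)}]`, the sum running over all
`n`-element subsets `F = {j_1(F) < … < j_n(F)}` of `{1, …, m}`. -/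
theorem multicom_rectangular {R : Type*} [Ring R] {n m : ℕ} (γ : Fin m → R)
    (a : Fin n → Fin m → R)
    (hcomm : ∀ k j k' j', Commute (a k j) (a k' j'))
    (hcommγ : ∀ k j i, Commute (a k j) (γ i)) :
    multicom (fun k => ∑ j, a k j * γ j) =
      ∑ F : {F : Finset (Fin m) // F.card = n},
        (∑ σ : Equiv.Perm (Fin n),
            (Equiv.Perm.sign σ : ℤ) •
              (List.ofFn fun k => a k ((F.1.orderIsoOfFin F.2 (σ k) : Fin m))).prod) *
          multicom (fun k => γ ((F.1.orderIsoOfFin F.2 k : Fin m))) := by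
  have hvanish (g : Fin n → Fin m) (hg : ¬ Injective g) : multicom (fun k => γ (g k)) = 0 :=
    multicom_eq_zero_of_not_injective fun h => hg (h.of_comp (f := γ))
  rw [multicom_sum_mul γ a hcomm hcommγ, Fintype.sum_eq_sum_card_eq_sum_perm _ fun g hg => by
    rw [hvanish g hg, mul_zero]]
  refine sum_congr rfl fun F _ => ?_
  simp_rw [multicom_comp_perm (fun k => γ (F.1.orderIsoOfFin F.2 k : Fin m)), mul_smul_comm,
    ← smul_mul_assoc, sum_mul]
end

section
/- Let A be a unital complex Banach algebra and let δ : A → A be a continuous linear derivation, i.e. δ(xy) = δ(x)y + xδ(y) for all x, y ∈ A. Then for every b ∈ A one has δ(exp(b)) = ∫₀¹ exp(t·b)·δ(b)·exp((1−t)·b) dt, where the integral is a Bochner integral in A. In particular, for a ∈ A and s ∈ ℂ, δ(exp(sa)) = s·∫₀¹ exp(tsa)·δ(a)·exp((1−t)sa) dt. -/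
/-!
For a Leibniz map `δ`, the function `F t = δ (exp (t • b)) * exp ((1 - t) • b)` has
derivative `exp (t • b) * δ b * exp ((1 - t) • b)`: the term
`δ (exp (t • b)) * b * exp ((1 - t) • b)` coming from the Leibniz rule cancels against the
derivative of the second factor. Since `F 0 = δ 1 * exp b = 0` and `F 1 = δ (exp b)`, the formula
is the fundamental theorem of calculus for `F` on `[0, 1]`; the second formula is the first one
for `b = s • a`.
-/

open NormedSpace

theorem map_one_eq_zero_of_leibniz {R : Type*} [NonAssocRing R] (δ : R → R)
    (hδ : ∀ x y : R, δ (x * y) = δ x * y + x * δ y) : δ 1 = 0 := by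
  simpa using hδ 1 1

section RealBanachAlgebra

variable {𝔸 : Type*} [NormedRing 𝔸] [NormedAlgebra ℝ 𝔸] [CompleteSpace 𝔸]

theorem hasDerivAt_exp_one_sub_smul (b : 𝔸) (t : ℝ) :
    HasDerivAt (fun u : ℝ => exp ((1 - u) • b)) (-(b * exp ((1 - t) • b))) t := by
  simpa [Function.comp_def] using
    (hasDerivAt_exp_smul_const' b (1 - t)).scomp t ((hasDerivAt_id t).const_sub 1)

theorem hasDerivAt_map_exp_smul_mul_exp_one_sub_smul (δ : 𝔸 →L[ℝ] 𝔸)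
    (hδ : ∀ x y : 𝔸, δ (x * y) = δ x * y + x * δ y) (b : 𝔸) (t : ℝ) :
    HasDerivAt (fun u : ℝ => δ (exp (u • b)) * exp ((1 - u) • b))
      (exp (t • b) * δ b * exp ((1 - t) • b)) t := by
  have hδexp : HasDerivAt (fun u : ℝ => δ (exp (u • b))) (δ (exp (t • b) * b)) t :=
    δ.hasFDerivAt.comp_hasDerivAt t (hasDerivAt_exp_smul_const b t)
  refine (hδexp.mul (hasDerivAt_exp_one_sub_smul b t)).congr_deriv ?_
  rw [hδ]
  noncomm_ring

theorem map_exp_eq_integral_of_leibniz (δ : 𝔸 →L[ℝ] 𝔸)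
    (hδ : ∀ x y : 𝔸, δ (x * y) = δ x * y + x * δ y) (b : 𝔸) :
    δ (exp b) = ∫ t in (0 : ℝ)..1, exp (t • b) * δ b * exp ((1 - t) • b) := by
  have hexp : Continuous fun t : ℝ => exp (t • b) :=
    (differentiable_exp_smul_const ℝ b).continuous
  have hcont : Continuous fun t : ℝ => exp (t • b) * δ b * exp ((1 - t) • b) :=
    (hexp.mul continuous_const).mul (hexp.comp (continuous_const.sub continuous_id))
  rw [intervalIntegral.integral_eq_sub_of_hasDerivAt
    (fun t _ => hasDerivAt_map_exp_smul_mul_exp_one_sub_smul δ hδ b t)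
    (hcont.intervalIntegrable 0 1)]
  simp [map_one_eq_zero_of_leibniz δ hδ]

end RealBanachAlgebra

/-- For a continuous linear derivation `δ` on a unital complex Banach algebra `A`, one has
`δ(exp b) = ∫₀¹ exp(t b) δ(b) exp((1−t) b) dt` for every `b ∈ A`; in particular, for `a ∈ A`
and `s ∈ ℂ`, `δ(exp(s a)) = s ∫₀¹ exp(t s a) δ(a) exp((1−t) s a) dt`. -/
theorem derivation_exp_integral {A : Type*} [NormedRing A] [NormedAlgebra ℂ A]
    [CompleteSpace A] (δ : A →L[ℂ] A)
    (hδ : ∀ x y : A, δ (x * y) = δ x * y + x * δ y) :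
    (∀ b : A, δ (exp b) = ∫ t in (0:ℝ)..1, exp (t • b) * δ b * exp ((1 - t) • b)) ∧
    (∀ (a : A) (s : ℂ), δ (exp (s • a)) =
      s • ∫ t in (0:ℝ)..1,
        exp (((t : ℂ) * s) • a) * δ a * exp (((1 - (t : ℂ)) * s) • a)) := by
  have key : ∀ b : A,
      δ (exp b) = ∫ t in (0:ℝ)..1, exp (t • b) * δ b * exp ((1 - t) • b) :=
    map_exp_eq_integral_of_leibniz (δ.restrictScalars ℝ) hδ
  refine ⟨key, fun a s => ?_⟩
  rw [key, map_smul, ← intervalIntegral.integral_smul]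
  refine intervalIntegral.integral_congr fun t _ => ?_
  simp only [smul_mul_assoc, mul_smul_comm, ← smul_assoc, Complex.real_smul, Complex.ofReal_sub,
    Complex.ofReal_one]
end

section
/- Let H be a complex Hilbert space, L a closed densely defined unbounded operator on H, and S ⊆ Dom L a dense subspace with L(S) ⊆ S which is a core for L (the closure of the restriction of L to S equals L). Let T₀ : S → S be a linear map for which there are constants C, C′ < ∞ with ‖T₀ξ‖ ≤ C‖ξ‖ and ‖L(T₀ξ) − T₀(Lξ)‖ ≤ C′‖ξ‖ for all ξ ∈ S. Then the continuous extension T of T₀ to H maps Dom L into Dom L, and for every ξ ∈ Dom L one has L(Tξ) = T(Lξ) + Bξ, where B is the continuous extension to H of the map ξ ↦ L(T₀ξ) − T₀(Lξ) defined on S. -/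
/-- Let `L` be a closed densely defined operator on a complex Hilbert space `H`, and let
`S ⊆ Dom L` be a dense subspace which is invariant under `L` and is a core for `L`.  Let
`T₀ : S → S` be a linear map satisfying `‖T₀ ξ‖ ≤ C ‖ξ‖` and `‖L(T₀ ξ) − T₀(L ξ)‖ ≤ C′ ‖ξ‖`
on `S`.  Then the continuous extension `T` of `T₀` maps `Dom L` into `Dom L` and satisfies
`L(T ξ) = T(L ξ) + B ξ` for all `ξ ∈ Dom L`, where `B` is the continuous extension of
`ξ ↦ L(T₀ ξ) − T₀(L ξ)`. -/
theorem bounded_commutator_extension {H : Type*} [NormedAddCommGroup H]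
    [InnerProductSpace ℂ H] [CompleteSpace H]
    (dom : Submodule ℂ H) (L : dom →ₗ[ℂ] H)
    (hdense : Dense (dom : Set H))
    (hLclosed : IsClosed {p : H × H | ∃ ξ : dom, p = ((ξ : H), L ξ)})
    (S : Submodule ℂ H) (hS : ∀ x ∈ S, x ∈ dom)
    (hSdense : Dense (S : Set H))
    (hinv : ∀ x : S, L ⟨(x : H), hS x x.2⟩ ∈ S)
    (hcore : closure {p : H × H | ∃ x : S, p = ((x : H), L ⟨(x : H), hS x x.2⟩)} =
      {p : H × H | ∃ ξ : dom, p = ((ξ : H), L ξ)})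
    (T₀ : S →ₗ[ℂ] S) (C C' : ℝ)
    (hC : ∀ x : S, ‖(T₀ x : H)‖ ≤ C * ‖(x : H)‖)
    (hC' : ∀ x : S, ‖L ⟨(T₀ x : H), hS (T₀ x) (T₀ x).2⟩ -
        ((T₀ ⟨L ⟨(x : H), hS x x.2⟩, hinv x⟩ : S) : H)‖ ≤ C' * ‖(x : H)‖)
    (T B : H →L[ℂ] H)
    (hT : ∀ x : S, T x = (T₀ x : H))
    (hB : ∀ x : S, B x = L ⟨(T₀ x : H), hS (T₀ x) (T₀ x).2⟩ -
        ((T₀ ⟨L ⟨(x : H), hS x x.2⟩, hinv x⟩ : S) : H)) :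
    ∀ ξ : dom, ∃ h : T ξ ∈ dom, L ⟨T ξ, h⟩ = T (L ξ) + B ξ := by
  intro ξ
  set G : Set (H × H) := {p : H × H | ∃ x : S, p = ((x : H), L ⟨(x : H), hS x x.2⟩)} with hG
  have hf : Continuous (fun p : H × H => (T p.1, T p.2 + B p.1)) := by continuity
  have hmaps : Set.MapsTo (fun p : H × H => (T p.1, T p.2 + B p.1)) G G := by
    rintro p ⟨x, rfl⟩
    refine ⟨T₀ x, ?_⟩
    have h1 : T (x : H) = ((T₀ x : S) : H) := hT x
    have h2 : T (L ⟨(x : H), hS x x.2⟩) = ((T₀ ⟨L ⟨(x : H), hS x x.2⟩, hinv x⟩ : S) : H) :=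
      hT ⟨L ⟨(x : H), hS x x.2⟩, hinv x⟩
    simp only [h1, h2, hB x]
    refine Prod.ext rfl ?_
    simp only
    abel
  have hmem : ((ξ : H), L ξ) ∈ closure G := by
    rw [hcore]; exact ⟨ξ, rfl⟩
  have hmem2 : (T (ξ : H), T (L ξ) + B (ξ : H)) ∈ closure G := by
    exact map_mem_closure (f := fun p : H × H => (T p.1, T p.2 + B p.1)) hf hmem hmaps
  rw [hcore] at hmem2
  obtain ⟨η, hη⟩ := hmem2
  have h1 : T (ξ : H) = (η : H) := congrArg Prod.fst hη
  have h2 : T (L ξ) + B (ξ : H) = L η := congrArg Prod.snd hη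
  refine ⟨h1 ▸ η.2, ?_⟩
  have : (⟨T (ξ : H), h1 ▸ η.2⟩ : dom) = η := Subtype.ext h1
  rw [this, ← h2]
end

section
/- Let s : X → Y be a continuous open map between compact Hausdorff topological spaces. Then the function n : Y → ℕ ∪ {∞} defined by n(y) = #(s⁻¹({y})) (the cardinality of the fiber over y) is lower semicontinuous on Y, i.e. for every m the set {y ∈ Y : n(y) ≥ m} is open. -/
/-!
Fix `m < n(y)` and pick `m + 1` distinct points of the fiber over `y`. Separate them by pairwise
disjoint open sets `Uᵢ`; since `s` is open, every `y'` in the open neighbourhood `⋂ᵢ s(Uᵢ)` of `y`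
has a preimage in each `Uᵢ`, and these preimages are distinct, so `n(y') ≥ m + 1`.
-/

open Filter Topology

theorem Set.exists_finite_subset_lt_encard {α : Type*} {S : Set α} {c : ℕ∞} (hc : c < S.encard) :
    ∃ t ⊆ S, t.Finite ∧ c < t.encard := by
  obtain ⟨t, htS, htc⟩ := Set.exists_subset_encard_eq (Order.add_one_le_of_lt hc)
  have hc_top : c ≠ ⊤ := hc.ne_top
  refine ⟨t, htS, Set.encard_ne_top_iff.mp ?_, ?_⟩
  · rw [htc]
    exact WithTop.add_ne_top.mpr ⟨hc_top, ENat.one_ne_top⟩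
  · rw [htc]
    exact (ENat.lt_add_one_iff hc_top).mpr le_rfl

theorem Set.PairwiseDisjoint.encard_le_of_inter_nonempty {α β : Type*} {t : Set α} {A : Set β}
    {U : α → Set β} (hU : t.PairwiseDisjoint U) (hA : ∀ x ∈ t, (U x ∩ A).Nonempty) :
    t.encard ≤ A.encard := by
  rcases t.eq_empty_or_nonempty with rfl | ⟨x₀, hx₀⟩
  · simp
  have : Nonempty β := ⟨(hA x₀ hx₀).some⟩
  choose! g hgU hgA using hA
  refine Set.encard_le_encard_of_injOn hgA fun a ha b hb hab => ?_
  by_contra hne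
  exact Set.disjoint_left.mp (hU ha hb hne) (hgU a ha) (hab ▸ hgU b hb)

theorem IsOpenMap.eventually_encard_le_encard_preimage_singleton {X Y : Type*}
    [TopologicalSpace X] [T2Space X] [TopologicalSpace Y] {s : X → Y} (hs : IsOpenMap s)
    {t : Set X} (ht : t.Finite) {y : Y} (hty : t ⊆ s ⁻¹' {y}) :
    ∀ᶠ y' in 𝓝 y, t.encard ≤ (s ⁻¹' {y'}).encard := by
  obtain ⟨U, hU, hUdisj⟩ := ht.t2_separation
  have hV_open : IsOpen (⋂ x ∈ t, s '' U x) :=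
    ht.isOpen_biInter fun x _ => hs _ (hU x).2
  have hyV : y ∈ ⋂ x ∈ t, s '' U x :=
    Set.mem_iInter₂.mpr fun x hx => ⟨x, (hU x).1, hty hx⟩
  filter_upwards [hV_open.mem_nhds hyV] with y' hy'
  refine hUdisj.encard_le_of_inter_nonempty fun x hx => ?_
  obtain ⟨z, hzU, hzy'⟩ := Set.mem_iInter₂.mp hy' x hx
  exact ⟨z, hzU, hzy'⟩

theorem fiber_card_lowerSemicontinuous_general {X Y : Type*}
    [TopologicalSpace X] [T2Space X]
    [TopologicalSpace Y]
    (s : X → Y) (hs_open : IsOpenMap s) :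
    LowerSemicontinuous (fun y : Y => (s ⁻¹' {y}).encard) := by
  intro y c hc
  obtain ⟨t, hty, ht, hct⟩ := Set.exists_finite_subset_lt_encard hc
  filter_upwards [hs_open.eventually_encard_le_encard_preimage_singleton ht hty] with y' hy'
  exact hct.trans_le hy'

/-- If `s : X → Y` is a continuous open map between compact Hausdorff spaces, then the fiber
cardinality function `n(y) = #(s⁻¹{y})`, with values in `ℕ∞ = ℕ ∪ {∞}`, is lower
semicontinuous on `Y`. -/
theorem fiber_card_lowerSemicontinuous {X Y : Type*}
    [TopologicalSpace X] [CompactSpace X] [T2Space X]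
    [TopologicalSpace Y] [CompactSpace Y] [T2Space Y]
    (s : X → Y) (hs_cont : Continuous s) (hs_open : IsOpenMap s) :
    LowerSemicontinuous (fun y : Y => (s ⁻¹' {y}).encard) :=
  fiber_card_lowerSemicontinuous_general s hs_open
end

section
/- Let X be a compact Hausdorff space, V ⊆ X an open subset, p ≥ 1, and s : X → ℝ^p a continuous map whose restriction to V is an open map (the image under s of every open subset of V is open in ℝ^p). Assume there is m < ∞ such that #(s⁻¹({x}) ∩ V) ≤ m for every x ∈ ℝ^p. Then there exists a subset Y of the open set s(V), open and dense in s(V), such that every point of s⁻¹(Y) ∩ V has an open neighborhood N ⊆ V on which s restricts to a homeomorphism of N onto an open subset of ℝ^p. -/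
/-!
Near a point `y` of `s(V)` whose fiber `F` in `V` is finite, choose pairwise disjoint open
neighborhoods `N a ⊆ V` of the points `a ∈ F`; since `s` is open on `V`, every `y'` close to `y`
has a preimage in each `N a`. Hence the fiber count `n(y) = #(s⁻¹{y} ∩ V)` is lower
semicontinuous, and where it is locally constant the fiber of `y'` meets each `N a` exactly
once, so `s` is injective on a neighborhood of each point of `F`. A bounded lower semicontinuous
`ℕ`-valued function is locally constant near any point where it is maximal on a given open
set, so the locus of local constancy is dense.
-/

open Set Filter Topology

section ConstLocus

variable {β : Type*} [TopologicalSpace β]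

def constLocus {γ : Type*} (f : β → γ) : Set β :=
  {y | ∀ᶠ y' in 𝓝 y, f y' = f y}

theorem isOpen_constLocus {γ : Type*} (f : β → γ) : IsOpen (constLocus f) := by
  refine isOpen_iff_mem_nhds.2 fun y hy => ?_
  filter_upwards [eventually_eventually_nhds.2 hy, hy] with y' hy'' hy'
  exact hy''.mono fun z hz => hz.trans hy'.symm

theorem subset_closure_inter_constLocus {U : Set β} (hU : IsOpen U) {f : β → ℕ}
    (hf : ∀ y, ∀ᶠ y' in 𝓝 y, f y ≤ f y') (hbdd : BddAbove (f '' U)) :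
    U ⊆ closure (U ∩ constLocus f) := by
  intro y₀ hy₀
  refine mem_closure_iff.2 fun o ho hy₀o => ?_
  have hne : (f '' (o ∩ U)).Nonempty := ⟨f y₀, y₀, ⟨hy₀o, hy₀⟩, rfl⟩
  obtain ⟨y, hy, hymax⟩ := Nat.sSup_mem hne (hbdd.mono (image_mono inter_subset_right))
  refine ⟨y, hy.1, hy.2, ?_⟩
  filter_upwards [hf y, (ho.inter hU).mem_nhds hy] with y' hle hy'
  exact le_antisymm (hymax ▸ le_csSup (hbdd.mono (image_mono inter_subset_right)) ⟨y', hy', rfl⟩)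
    hle

end ConstLocus

section DisjointFamily

variable {X : Type*} {F T : Set X} {N : X → Set X}

theorem exists_injOn_of_pairwiseDisjoint (hN : F.PairwiseDisjoint N)
    (hT : ∀ a ∈ F, (T ∩ N a).Nonempty) :
    ∃ g : X → X, InjOn g F ∧ ∀ a ∈ F, g a ∈ T ∩ N a := by
  choose! g hg using hT
  exact ⟨g, fun a ha b hb hab => hN.elim_set ha hb (g a) (hg a ha).2 (hab ▸ (hg b hb).2),
    hg⟩

theorem ncard_le_of_pairwiseDisjoint (hTfin : T.Finite) (hN : F.PairwiseDisjoint N)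
    (hT : ∀ a ∈ F, (T ∩ N a).Nonempty) : F.ncard ≤ T.ncard := by
  obtain ⟨g, hg, hgT⟩ := exists_injOn_of_pairwiseDisjoint hN hT
  rw [← hg.ncard_image]
  exact ncard_le_ncard (image_subset_iff.2 fun a ha => (hgT a ha).1) hTfin

theorem subsingleton_inter_of_ncard_le (hTfin : T.Finite) (hN : F.PairwiseDisjoint N)
    (hT : ∀ a ∈ F, (T ∩ N a).Nonempty) (hle : T.ncard ≤ F.ncard) {a : X} (ha : a ∈ F) :
    (T ∩ N a).Subsingleton := by
  obtain ⟨g, hg, hgT⟩ := exists_injOn_of_pairwiseDisjoint hN hT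
  have himage : g '' F = T :=
    eq_of_subset_of_ncard_le (image_subset_iff.2 fun b hb => (hgT b hb).1)
      (hg.ncard_image ▸ hle) hTfin
  have hx : ∀ x ∈ T ∩ N a, x = g a := by
    rintro x ⟨hxT, hxa⟩
    obtain ⟨b, hb, rfl⟩ := himage.symm ▸ hxT
    rw [hN.elim_set hb ha (g b) (hgT b hb).2 hxa]
  exact fun x hx' y hy' => (hx x hx').trans (hx y hy').symm

end DisjointFamily

section Fibers

variable {X β : Type*} [TopologicalSpace X] [TopologicalSpace β] {s : X → β} {V : Set X}

noncomputable def fiberCard (s : X → β) (V : Set X) (y : β) : ℕ :=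
  (s ⁻¹' {y} ∩ V).ncard

theorem exists_disjoint_nhds_fiber [T2Space X] (hV : IsOpen V)
    (hs_open : ∀ U ⊆ V, IsOpen U → IsOpen (s '' U)) {y : β} (hF : (s ⁻¹' {y} ∩ V).Finite) :
    ∃ N : X → Set X, (∀ a ∈ s ⁻¹' {y} ∩ V, IsOpen (N a) ∧ a ∈ N a ∧ N a ⊆ V) ∧
      (s ⁻¹' {y} ∩ V).PairwiseDisjoint N ∧
      ∀ᶠ y' in 𝓝 y, ∀ a ∈ s ⁻¹' {y} ∩ V, (s ⁻¹' {y'} ∩ V ∩ N a).Nonempty := by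
  obtain ⟨U, hU, hdisj⟩ := hF.t2_separation
  refine ⟨fun a => U a ∩ V, fun a ha => ⟨(hU a).2.inter hV, ⟨(hU a).1, ha.2⟩,
    inter_subset_right⟩, hdisj.mono fun a => inter_subset_left, ?_⟩
  refine (eventually_all_finite hF).2 fun a ha => ?_
  filter_upwards [(hs_open _ inter_subset_right ((hU a).2.inter hV)).mem_nhds
    ⟨a, ⟨(hU a).1, ha.2⟩, ha.1⟩] with y' ⟨x, hx, hxy⟩
  exact ⟨x, ⟨hxy, hx.2⟩, hx⟩

theorem eventually_fiberCard_le [T2Space X] (hV : IsOpen V)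
    (hs_open : ∀ U ⊆ V, IsOpen U → IsOpen (s '' U))
    (hfin : ∀ y, (s ⁻¹' {y} ∩ V).Finite) (y : β) :
    ∀ᶠ y' in 𝓝 y, fiberCard s V y ≤ fiberCard s V y' := by
  obtain ⟨N, -, hdisj, hmeet⟩ := exists_disjoint_nhds_fiber hV hs_open (hfin y)
  exact hmeet.mono fun y' hy' => ncard_le_of_pairwiseDisjoint (hfin y') hdisj hy'

theorem exists_nhds_injOn_of_mem_constLocus [T2Space X] (hV : IsOpen V) (hs : Continuous s)
    (hs_open : ∀ U ⊆ V, IsOpen U → IsOpen (s '' U))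
    (hfin : ∀ y, (s ⁻¹' {y} ∩ V).Finite) {χ : X} (hχV : χ ∈ V)
    (hχ : s χ ∈ constLocus (fiberCard s V)) :
    ∃ N : Set X, IsOpen N ∧ χ ∈ N ∧ N ⊆ V ∧ InjOn s N := by
  obtain ⟨N, hN, hdisj, hmeet⟩ := exists_disjoint_nhds_fiber hV hs_open (hfin (s χ))
  have hχF : χ ∈ s ⁻¹' {s χ} ∩ V := ⟨rfl, hχV⟩
  obtain ⟨W, hW, hWo, hχW⟩ := eventually_nhds_iff.1 (hmeet.and hχ)
  obtain ⟨hNo, hχN, hNV⟩ := hN χ hχF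
  refine ⟨N χ ∩ s ⁻¹' W, hNo.inter (hWo.preimage hs), ⟨hχN, hχW⟩,
    inter_subset_left.trans hNV, fun a ha b hb hab => ?_⟩
  obtain ⟨hmeet', hcard⟩ := hW (s a) ha.2
  exact subsingleton_inter_of_ncard_le (hfin (s a)) hdisj hmeet' hcard.le hχF
    ⟨⟨rfl, hNV ha.1⟩, ha.1⟩ ⟨⟨hab.symm, hNV hb.1⟩, hb.1⟩

theorem exists_homeomorph_image_of_injOn {N : Set X} (hN : IsOpen N) (hs : Continuous s)
    (hs_open : ∀ U ⊆ N, IsOpen U → IsOpen (s '' U)) (hinj : InjOn s N) :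
    ∃ e : N ≃ₜ s '' N, ∀ x : N, (e x : β) = s x := by
  let e := Equiv.Set.imageOfInjOn s N hinj
  have he_open : IsOpenMap e := fun U hU => by
    have himage : e '' U = Subtype.val ⁻¹' (s '' (Subtype.val '' U)) := by
      ext ⟨y, hy⟩
      simp [e, Equiv.Set.imageOfInjOn, Subtype.ext_iff]
    rw [himage]
    exact (hs_open _ (Subtype.coe_image_subset N U) (hN.isOpenMap_subtype_val U hU)).preimage
      continuous_subtype_val
  exact ⟨e.toHomeomorphOfContinuousOpen ((hs.comp continuous_subtype_val).subtype_mk _)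
    he_open, fun _ => rfl⟩

end Fibers

theorem local_homeo_on_dense_subset_general {X : Type*} [TopologicalSpace X]
    [T2Space X] (p : ℕ) (V : Set X) (hV : IsOpen V)
    (s : X → (Fin p → ℝ)) (hs_cont : Continuous s)
    (hs_open : ∀ U : Set X, U ⊆ V → IsOpen U → IsOpen (s '' U))
    (m : ℕ) (hm : ∀ x : Fin p → ℝ, (s ⁻¹' {x} ∩ V).encard ≤ m) :
    ∃ Y : Set (Fin p → ℝ), Y ⊆ s '' V ∧ IsOpen Y ∧ s '' V ⊆ closure Y ∧
      ∀ χ ∈ s ⁻¹' Y ∩ V, ∃ N : Set X, IsOpen N ∧ χ ∈ N ∧ N ⊆ V ∧ IsOpen (s '' N) ∧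
        ∃ e : N ≃ₜ (s '' N), ∀ x : N, (e x : Fin p → ℝ) = s x := by
  have hfin y := (encard_le_coe_iff_finite_ncard_le.1 (hm y)).1
  have hbdd : BddAbove (fiberCard s V '' (s '' V)) :=
    ⟨m, forall_mem_image.2 fun y _ => (encard_le_coe_iff_finite_ncard_le.1 (hm y)).2⟩
  have hsV : IsOpen (s '' V) := hs_open V subset_rfl hV
  refine ⟨s '' V ∩ constLocus (fiberCard s V), inter_subset_left,
    hsV.inter (isOpen_constLocus _),
    subset_closure_inter_constLocus hsV (eventually_fiberCard_le hV hs_open hfin) hbdd, ?_⟩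
  rintro χ ⟨⟨-, hχ⟩, hχV⟩
  obtain ⟨N, hNo, hχN, hNV, hinj⟩ :=
    exists_nhds_injOn_of_mem_constLocus hV hs_cont hs_open hfin hχV hχ
  have hs_openN U (hU : U ⊆ N) := hs_open U (hU.trans hNV)
  exact ⟨N, hNo, hχN, hNV, hs_openN N subset_rfl hNo,
    exists_homeomorph_image_of_injOn hNo hs_cont hs_openN hinj⟩

/-- Let `X` be compact Hausdorff, `V ⊆ X` open, and `s : X → ℝ^p` continuous whose restriction
to `V` is an open map.  If the number of preimages in `V` of any point is uniformly bounded by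
some `m`, then there is an open dense subset `Y` of `s(V)` such that every point of
`s⁻¹(Y) ∩ V` has an open neighborhood `N ⊆ V` on which `s` restricts to a homeomorphism onto
an open subset of `ℝ^p`. -/
theorem local_homeo_on_dense_subset {X : Type*} [TopologicalSpace X] [CompactSpace X]
    [T2Space X] (p : ℕ) (hp : 1 ≤ p) (V : Set X) (hV : IsOpen V)
    (s : X → (Fin p → ℝ)) (hs_cont : Continuous s)
    (hs_open : ∀ U : Set X, U ⊆ V → IsOpen U → IsOpen (s '' U))
    (m : ℕ) (hm : ∀ x : Fin p → ℝ, (s ⁻¹' {x} ∩ V).encard ≤ m) :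
    ∃ Y : Set (Fin p → ℝ), Y ⊆ s '' V ∧ IsOpen Y ∧ s '' V ⊆ closure Y ∧
      ∀ χ ∈ s ⁻¹' Y ∩ V, ∃ N : Set X, IsOpen N ∧ χ ∈ N ∧ N ⊆ V ∧ IsOpen (s '' N) ∧
        ∃ e : N ≃ₜ (s '' N), ∀ x : N, (e x : Fin p → ℝ) = s x :=
  local_homeo_on_dense_subset_general p V hV s hs_cont hs_open m hm
end

section
/- For every real p > 1 there exists a constant c_p < ∞ such that for every nonincreasing sequence (μ_n)_{n≥1} of nonnegative real numbers one has Σ_{N=1}^∞ N^{1/p − 2}·σ_N ≤ c_p·(Σ_{n=1}^∞ μ_n)^{1/p}·μ_1^{1 − 1/p}, where σ_N = Σ_{n=1}^N μ_n; the inequality is understood in [0,∞] (both sides may be infinite). -/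
/-!
Write `r = 1/p ∈ (0, 1)`, `a = μ₀` and `T = Σ μₙ`. Since `μ` is nonincreasing,
`σ_N ≤ min ((N + 1) a, T)`. Splitting the series at `M ≈ T / a` and bounding the two pieces by
`Σ_{N<M} (N+1)^(r-1) ≤ M^r / r` and `Σ_{N≥M} (N+1)^(r-2) ≤ M^(r-1) / (1 - r)` gives at most
`(2/r + 1/(1-r)) T^r a^(1-r)`. Both power sums telescope, the increments of `x ↦ x^s` being
controlled by Bernoulli's inequality `(1 - v)^s ≤ 1 - s v` for `0 ≤ s ≤ 1`.
-/

open scoped ENNReal NNReal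

open Finset Real

theorem mul_rpow_sub_one_le_rpow_sub_rpow {s x : ℝ} (hs0 : 0 ≤ s) (hs1 : s ≤ 1) (hx : 0 ≤ x) :
    s * (x + 1) ^ (s - 1) ≤ (x + 1) ^ s - x ^ s := by
  have hy : 0 < x + 1 := by linarith
  have hv : (x + 1)⁻¹ ≤ 1 := inv_le_one_of_one_le₀ (by linarith)
  have hx_eq : x = (x + 1) * (1 + -(x + 1)⁻¹) := by field_simp; ring
  have bernoulli : (1 + -(x + 1)⁻¹) ^ s ≤ 1 + s * -(x + 1)⁻¹ :=
    rpow_one_add_le_one_add_mul_self (by linarith) hs0 hs1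
  have hxs : x ^ s ≤ (x + 1) ^ s * (1 + s * -(x + 1)⁻¹) := by
    rw [hx_eq, mul_rpow hy.le (by linarith), ← hx_eq]
    exact mul_le_mul_of_nonneg_left bernoulli (rpow_nonneg hy.le s)
  rw [rpow_sub_one hy.ne']
  linarith [show (x + 1) ^ s * (1 + s * -(x + 1)⁻¹) = (x + 1) ^ s - s * ((x + 1) ^ s / (x + 1))
    by ring]

theorem mul_rpow_neg_sub_one_le_rpow_neg_sub_rpow_neg {q x : ℝ} (hq0 : 0 ≤ q) (hq1 : q ≤ 1)
    (hx : 0 < x) : q * (x + 1) ^ (-q - 1) ≤ x ^ (-q) - (x + 1) ^ (-q) := by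
  have hy : 0 < x + 1 := by linarith
  have hA : 0 < (x + 1) ^ q := rpow_pos_of_pos hy q
  have hX : 0 < x ^ q := rpow_pos_of_pos hx q
  have concave := mul_rpow_sub_one_le_rpow_sub_rpow hq0 hq1 hx.le
  rw [rpow_sub_one hy.ne'] at concave
  -- `(1 - w) (1 + w) ≤ 1` for `w = q / (x + 1)` turns the concave estimate into this one
  have key : x ^ q * (x + 1 + q) ≤ (x + 1) ^ q * (x + 1) := by
    have h1 : x ^ q * (x + 1) ≤ (x + 1) ^ q * (x + 1 - q) := by
      field_simp at concave
      linarith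
    refine le_of_mul_le_mul_right ?_ hy
    nlinarith [mul_le_mul_of_nonneg_right h1 (by linarith : 0 ≤ x + 1 + q), sq_nonneg q]
  rw [rpow_sub_one hy.ne', rpow_neg hx.le, rpow_neg hy.le, le_sub_iff_add_le]
  field_simp
  linarith

theorem sum_range_add_one_rpow_sub_one_le {q : ℝ} (hq0 : 0 < q) (hq1 : q ≤ 1) (M : ℕ) :
    ∑ N ∈ range M, ((N : ℝ) + 1) ^ (q - 1) ≤ (M : ℝ) ^ q / q := by
  rw [le_div_iff₀' hq0, mul_sum]
  calc ∑ N ∈ range M, q * ((N : ℝ) + 1) ^ (q - 1)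
      ≤ ∑ N ∈ range M, (((N + 1 : ℕ) : ℝ) ^ q - (N : ℝ) ^ q) :=
        sum_le_sum fun N _ => by
          push_cast
          exact mul_rpow_sub_one_le_rpow_sub_rpow hq0.le hq1 N.cast_nonneg
    _ = (M : ℝ) ^ q := by
        rw [sum_range_sub (fun N : ℕ => (N : ℝ) ^ q)]
        simp [zero_rpow hq0.ne']

theorem sum_range_add_rpow_neg_sub_one_le {q x : ℝ} (hq0 : 0 < q) (hq1 : q ≤ 1) (hx : 0 < x)
    (K : ℕ) : ∑ k ∈ range K, (x + k + 1) ^ (-q - 1) ≤ x ^ (-q) / q := by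
  rw [le_div_iff₀' hq0, mul_sum]
  calc ∑ k ∈ range K, q * (x + k + 1) ^ (-q - 1)
      ≤ ∑ k ∈ range K, ((x + k) ^ (-q) - (x + (k + 1 : ℕ)) ^ (-q)) :=
        sum_le_sum fun k _ => by
          rw [Nat.cast_succ, ← add_assoc]
          exact mul_rpow_neg_sub_one_le_rpow_neg_sub_rpow_neg hq0.le hq1 (by positivity)
    _ = x ^ (-q) - (x + K) ^ (-q) := by
        rw [sum_range_sub' (fun k : ℕ => (x + k) ^ (-q))]
        simp
    _ ≤ x ^ (-q) := sub_le_self _ (rpow_nonneg (by positivity) _)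

theorem ENNReal.natCast_add_one_rpow (n : ℕ) (s : ℝ) :
    ((n : ℝ≥0∞) + 1) ^ s = ENNReal.ofReal (((n : ℝ) + 1) ^ s) := by
  rw [← ENNReal.ofReal_rpow_of_pos (by positivity), ENNReal.ofReal_add n.cast_nonneg zero_le_one,
    ENNReal.ofReal_natCast, ENNReal.ofReal_one]

theorem ENNReal.sum_range_natCast_add_one_rpow_sub_one_le {q : ℝ} (hq0 : 0 < q) (hq1 : q ≤ 1)
    (M : ℕ) : ∑ N ∈ range M, ((N : ℝ≥0∞) + 1) ^ (q - 1) ≤ ENNReal.ofReal ((M : ℝ) ^ q / q) := by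
  simp_rw [ENNReal.natCast_add_one_rpow]
  rw [← ENNReal.ofReal_sum_of_nonneg fun N _ => by positivity]
  exact ENNReal.ofReal_le_ofReal (sum_range_add_one_rpow_sub_one_le hq0 hq1 M)

theorem ENNReal.tsum_natCast_add_one_rpow_neg_sub_one_le {q : ℝ} (hq0 : 0 < q) (hq1 : q ≤ 1)
    {M : ℕ} (hM : 0 < M) :
    ∑' k : ℕ, (((k + M : ℕ) : ℝ≥0∞) + 1) ^ (-q - 1) ≤ ENNReal.ofReal ((M : ℝ) ^ (-q) / q) := by
  refine ENNReal.tsum_le_of_sum_range_le fun K => ?_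
  simp_rw [ENNReal.natCast_add_one_rpow]
  rw [← ENNReal.ofReal_sum_of_nonneg fun N _ => by positivity]
  refine ENNReal.ofReal_le_ofReal ((sum_congr rfl fun k _ => ?_).trans_le
    (sum_range_add_rpow_neg_sub_one_le hq0 hq1 (Nat.cast_pos.2 hM) K))
  push_cast
  ring_nf

theorem ENNReal.sum_range_le_mul_of_antitone {μ : ℕ → ℝ≥0∞} (hμ : Antitone μ) (N : ℕ) :
    ∑ n ∈ range N, μ n ≤ N * μ 0 := by
  simpa using sum_le_card_nsmul (range N) μ (μ 0) fun n _ => hμ n.zero_le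

theorem ENNReal.tsum_rpow_mul_sum_range_le_of_split {r : ℝ} (hr0 : 0 < r) (hr1 : r < 1)
    {μ : ℕ → ℝ≥0∞} (hμ : Antitone μ) {M : ℕ} (hM : 0 < M) :
    ∑' N : ℕ, ((N : ℝ≥0∞) + 1) ^ (r - 2) * ∑ n ∈ range (N + 1), μ n ≤
      ENNReal.ofReal ((M : ℝ) ^ r / r) * μ 0 +
        ENNReal.ofReal ((M : ℝ) ^ (r - 1) / (1 - r)) * ∑' n, μ n := by
  rw [← ENNReal.summable.sum_add_tsum_nat_add' (k := M)]
  refine add_le_add ?_ ?_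
  · have hσ (N : ℕ) : ((N : ℝ≥0∞) + 1) ^ (r - 2) * ∑ n ∈ range (N + 1), μ n ≤
        ((N : ℝ≥0∞) + 1) ^ (r - 1) * μ 0 := by
      rw [show r - 1 = r - 2 + 1 by ring, ENNReal.rpow_add _ _ (by simp) (by simp),
        ENNReal.rpow_one, mul_assoc]
      gcongr
      exact_mod_cast ENNReal.sum_range_le_mul_of_antitone hμ (N + 1)
    calc ∑ N ∈ range M, ((N : ℝ≥0∞) + 1) ^ (r - 2) * ∑ n ∈ range (N + 1), μ n
        ≤ (∑ N ∈ range M, ((N : ℝ≥0∞) + 1) ^ (r - 1)) * μ 0 := by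
          rw [sum_mul]
          exact sum_le_sum fun N _ => hσ N
      _ ≤ ENNReal.ofReal ((M : ℝ) ^ r / r) * μ 0 := by
          gcongr
          exact ENNReal.sum_range_natCast_add_one_rpow_sub_one_le hr0 hr1.le M
  · have tail := ENNReal.tsum_natCast_add_one_rpow_neg_sub_one_le (q := 1 - r) (by linarith)
      (by linarith) hM
    rw [show -(1 - r) - 1 = r - 2 by ring, show -(1 - r) = r - 1 by ring] at tail
    calc ∑' k, (((k + M : ℕ) : ℝ≥0∞) + 1) ^ (r - 2) * ∑ n ∈ range (k + M + 1), μ n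
        ≤ (∑' k, (((k + M : ℕ) : ℝ≥0∞) + 1) ^ (r - 2)) * ∑' n, μ n := by
          rw [← ENNReal.tsum_mul_right]
          gcongr
          exact ENNReal.sum_le_tsum _
      _ ≤ ENNReal.ofReal ((M : ℝ) ^ (r - 1) / (1 - r)) * ∑' n, μ n := by gcongr

theorem div_rpow_mul_eq_rpow_mul_rpow {a T : ℝ} (r : ℝ) (ha : 0 < a) (hT : 0 ≤ T) :
    (T / a) ^ r * a = T ^ r * a ^ (1 - r) := by
  rw [div_rpow hT ha.le, rpow_sub ha, rpow_one]
  field_simp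

theorem exists_nat_rpow_interpolation_le {r a T : ℝ} (hr0 : 0 < r) (hr1 : r < 1) (ha : 0 < a)
    (haT : a ≤ T) : ∃ M : ℕ, 0 < M ∧
      (M : ℝ) ^ r / r * a + (M : ℝ) ^ (r - 1) / (1 - r) * T ≤
        (2 / r + 1 / (1 - r)) * (T ^ r * a ^ (1 - r)) := by
  have hT : 0 < T := ha.trans_le haT
  have ht : 1 ≤ T / a := (one_le_div ha).2 haT
  have hM : T / a ≤ ⌈T / a⌉₊ := Nat.le_ceil _
  have hM2 : (⌈T / a⌉₊ : ℝ) ≤ 2 * (T / a) := Nat.ceil_le_two_mul (by linarith)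
  refine ⟨⌈T / a⌉₊, Nat.ceil_pos.2 (by linarith), ?_⟩
  have head : (⌈T / a⌉₊ : ℝ) ^ r * a ≤ 2 * (T ^ r * a ^ (1 - r)) := by
    calc (⌈T / a⌉₊ : ℝ) ^ r * a ≤ (2 * (T / a)) ^ r * a := by gcongr
      _ = 2 ^ r * ((T / a) ^ r * a) := by rw [mul_rpow zero_le_two (by linarith)]; ring
      _ ≤ 2 * (T ^ r * a ^ (1 - r)) := by
          rw [div_rpow_mul_eq_rpow_mul_rpow r ha hT.le]
          exact mul_le_mul_of_nonneg_right (rpow_le_self_of_one_le one_le_two hr1.le)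
            (by positivity)
  have tail : (⌈T / a⌉₊ : ℝ) ^ (r - 1) * T ≤ T ^ r * a ^ (1 - r) := by
    calc (⌈T / a⌉₊ : ℝ) ^ (r - 1) * T ≤ (T / a) ^ (r - 1) * T :=
          mul_le_mul_of_nonneg_right
            (rpow_le_rpow_of_nonpos (by positivity) hM (by linarith)) hT.le
      _ = (T / a) ^ r * a := by
          rw [rpow_sub_one (by positivity)]
          field_simp [hT.ne']
      _ = T ^ r * a ^ (1 - r) := div_rpow_mul_eq_rpow_mul_rpow r ha hT.le
  calc (⌈T / a⌉₊ : ℝ) ^ r / r * a + (⌈T / a⌉₊ : ℝ) ^ (r - 1) / (1 - r) * T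
      = (⌈T / a⌉₊ : ℝ) ^ r * a / r + (⌈T / a⌉₊ : ℝ) ^ (r - 1) * T / (1 - r) := by ring
    _ ≤ 2 * (T ^ r * a ^ (1 - r)) / r + T ^ r * a ^ (1 - r) / (1 - r) := by
        gcongr
    _ = (2 / r + 1 / (1 - r)) * (T ^ r * a ^ (1 - r)) := by ring

theorem ENNReal.tsum_rpow_mul_sum_range_le_of_ne_top {r : ℝ} (hr0 : 0 < r) (hr1 : r < 1)
    {μ : ℕ → ℝ≥0∞} (hμ : Antitone μ) (ha : μ 0 ≠ 0) (hT : ∑' n, μ n ≠ ∞) :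
    ∑' N : ℕ, ((N : ℝ≥0∞) + 1) ^ (r - 2) * ∑ n ∈ range (N + 1), μ n ≤
      ENNReal.ofReal (2 / r + 1 / (1 - r)) * (∑' n, μ n) ^ r * μ 0 ^ (1 - r) := by
  have haT : μ 0 ≤ ∑' n, μ n := ENNReal.le_tsum 0
  have ha_top : μ 0 ≠ ∞ := ne_top_of_le_ne_top hT haT
  have ha' : 0 < (μ 0).toReal := ENNReal.toReal_pos ha ha_top
  have hT' : 0 < (∑' n, μ n).toReal := ENNReal.toReal_pos (ne_bot_of_le_ne_bot ha haT) hT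
  obtain ⟨M, hM, hbound⟩ :=
    exists_nat_rpow_interpolation_le hr0 hr1 ha' (ENNReal.toReal_mono hT haT)
  calc _ ≤ ENNReal.ofReal ((M : ℝ) ^ r / r) * μ 0 +
        ENNReal.ofReal ((M : ℝ) ^ (r - 1) / (1 - r)) * ∑' n, μ n :=
        ENNReal.tsum_rpow_mul_sum_range_le_of_split hr0 hr1 hμ hM
    _ = ENNReal.ofReal ((M : ℝ) ^ r / r * (μ 0).toReal +
          (M : ℝ) ^ (r - 1) / (1 - r) * (∑' n, μ n).toReal) := by
        rw [ENNReal.ofReal_add (by positivity) (by positivity), ENNReal.ofReal_mul (by positivity),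
          ENNReal.ofReal_mul (by positivity), ENNReal.ofReal_toReal ha_top,
          ENNReal.ofReal_toReal hT]
    _ ≤ ENNReal.ofReal ((2 / r + 1 / (1 - r)) *
          ((∑' n, μ n).toReal ^ r * (μ 0).toReal ^ (1 - r))) :=
        ENNReal.ofReal_le_ofReal hbound
    _ = _ := by
        rw [ENNReal.ofReal_mul (by positivity), ENNReal.ofReal_mul (by positivity),
          ← ENNReal.ofReal_rpow_of_pos hT', ← ENNReal.ofReal_rpow_of_pos ha',
          ENNReal.ofReal_toReal hT, ENNReal.ofReal_toReal ha_top, mul_assoc]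

theorem ENNReal.tsum_rpow_mul_sum_range_le {r : ℝ} (hr0 : 0 < r) (hr1 : r < 1)
    {μ : ℕ → ℝ≥0∞} (hμ : Antitone μ) :
    ∑' N : ℕ, ((N : ℝ≥0∞) + 1) ^ (r - 2) * ∑ n ∈ range (N + 1), μ n ≤
      ENNReal.ofReal (2 / r + 1 / (1 - r)) * (∑' n, μ n) ^ r * μ 0 ^ (1 - r) := by
  obtain ha | ha := eq_or_ne (μ 0) 0
  · have hμ0 (n : ℕ) : μ n = 0 := nonpos_iff_eq_zero.1 (ha ▸ hμ n.zero_le)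
    simp [hμ0]
  obtain hT | hT := eq_or_ne (∑' n, μ n) ∞
  · have hc : ENNReal.ofReal (2 / r + 1 / (1 - r)) ≠ 0 :=
      (ENNReal.ofReal_pos.2 (add_pos (by positivity) (one_div_pos.2 (by linarith)))).ne'
    have ha' : μ 0 ^ (1 - r) ≠ 0 := by simp [ENNReal.rpow_eq_zero_iff, ha, hr1.le]
    rw [hT, ENNReal.top_rpow_of_pos hr0, ENNReal.mul_top hc, ENNReal.top_mul ha']
    exact le_top
  exact ENNReal.tsum_rpow_mul_sum_range_le_of_ne_top hr0 hr1 hμ ha hT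

/-- Interpolation inequality: for every `p > 1` there is a constant `c_p < ∞` such that for
every nonincreasing sequence `(μ_n)_{n≥1}` of nonnegative reals, with `σ_N = Σ_{n≤N} μ_n`,
one has `Σ_N N^{1/p−2} σ_N ≤ c_p (Σ μ_n)^{1/p} μ_1^{1−1/p}` in `[0,∞]`. -/
theorem interpolation_inequality_sequences (p : ℝ) (hp : 1 < p) :
    ∃ c : ℝ≥0, ∀ μ : ℕ → ℝ≥0, Antitone μ →
      ∑' N : ℕ, ((N + 1 : ℝ≥0∞) ^ (1 / p - 2)) *
          (∑ n ∈ Finset.range (N + 1), (μ n : ℝ≥0∞)) ≤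
        (c : ℝ≥0∞) * (∑' n : ℕ, (μ n : ℝ≥0∞)) ^ (1 / p) * (μ 0 : ℝ≥0∞) ^ (1 - 1 / p) := by
  have hr0 : 0 < 1 / p := by positivity
  have hr1 : 1 / p < 1 := (div_lt_one (by linarith)).2 hp
  exact ⟨(2 / (1 / p) + 1 / (1 - 1 / p)).toNNReal, fun μ hμ =>
    ENNReal.tsum_rpow_mul_sum_range_le hr0 hr1 fun _ _ h => ENNReal.coe_le_coe.2 (hμ h)⟩
end

section
/- Let A be a unital complex Banach algebra and let x, y ∈ A. Then exp(x + y)·exp(−x) = Σ_{n=0}^∞ ∫_{S_n} α_{u_1}(y)·α_{u_2}(y)⋯α_{u_n}(y) du, where α_u(y) = exp(u·x)·y·exp(−u·x), S_n = {(u_1,…,u_n) : 0 ≤ u_1 ≤ u_2 ≤ … ≤ u_n ≤ 1} is the standard n-simplex with its Lebesgue measure, the n = 0 term is 1, and the series converges absolutely in A. -/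
/-!
`E(t) = exp(t(x+y)) exp(-tx)` solves `E' = E α_t`, `E(0) = 1`, i.e. the integral equation
`E(t) = 1 + ∫_0^t E(s) α_s ds`. Picard iteration of this equation produces the terms
`H_{n+1}(t) = ∫_0^t H_n(s) α_s ds`, and slicing the simplex `{0 ≤ u_1 ≤ … ≤ u_{n+1} ≤ t}`
along its largest coordinate `u_{n+1} = s` (Fubini) identifies `H_n(t)` with the simplex
integral.
The remainder `E - ∑_{n<N} H_n` satisfies the same recursion, so it is bounded by
`C (M t)^N / N!`, which tends to zero.
-/

open MeasureTheory

/-- The `n`-th term of the expansional (Araki/Dyson) series: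
`∫_{0 ≤ u_1 ≤ … ≤ u_n ≤ 1} α_{u_1}(y) ⋯ α_{u_n}(y) du` where
`α_u(y) = exp(u x) y exp(−u x)`. -/
noncomputable def expansionalTerm {A : Type*} [NormedRing A] [NormedAlgebra ℂ A]
    [CompleteSpace A] (x y : A) (n : ℕ) : A :=
  ∫ u in {u : Fin n → ℝ | (∀ i, 0 ≤ u i ∧ u i ≤ 1) ∧ Monotone u},
    (List.ofFn fun i : Fin n =>
      NormedSpace.exp ((u i) • x) * y * NormedSpace.exp (-((u i) • x))).prod

open Set Filter Nat NormedSpace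

theorem Fin.monotone_snoc_iff {α : Type*} [Preorder α] {n : ℕ} {v : Fin n → α} {a : α} :
    Monotone (Fin.snoc v a : Fin (n + 1) → α) ↔ Monotone v ∧ ∀ i, v i ≤ a := by
  refine ⟨fun h => ⟨fun i j hij => ?_, fun i => ?_⟩, fun ⟨hv, hva⟩ i j hij => ?_⟩
  · simpa using h (Fin.castSucc_le_castSucc_iff.mpr hij)
  · simpa using h (Fin.le_last i.castSucc)
  · induction j using Fin.lastCases with
    | last => induction i using Fin.lastCases <;> simp [hva]
    | cast j =>
      induction i using Fin.lastCases with
      | last => exact absurd hij (Fin.castSucc_lt_last j).not_ge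
      | cast i => simpa using hv (Fin.castSucc_le_castSucc_iff.mp hij)

def orderSimplex (n : ℕ) (t : ℝ) : Set (Fin n → ℝ) :=
  {u | (∀ i, 0 ≤ u i ∧ u i ≤ t) ∧ Monotone u}

theorem snoc_mem_orderSimplex_iff {n : ℕ} {t s : ℝ} {v : Fin n → ℝ} :
    Fin.snoc v s ∈ orderSimplex (n + 1) t ↔ s ∈ Icc 0 t ∧ v ∈ orderSimplex n s := by
  simp only [orderSimplex, mem_ofPred_eq, Fin.forall_fin_succ', Fin.snoc_castSucc, Fin.snoc_last,
    Fin.monotone_snoc_iff, mem_Icc]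
  constructor
  · rintro ⟨⟨hv, hs⟩, hmono, hvs⟩
    exact ⟨hs, fun i => ⟨(hv i).1, hvs i⟩, hmono⟩
  · rintro ⟨hs, hv, hmono⟩
    exact ⟨⟨fun i => ⟨(hv i).1, (hv i).2.trans hs.2⟩, hs⟩, hmono, fun i => (hv i).2⟩

theorem orderSimplex_zero (t : ℝ) : orderSimplex 0 t = univ :=
  eq_univ_of_forall fun _ => ⟨finZeroElim, fun i => i.elim0⟩

theorem isClosed_orderSimplex (n : ℕ) (t : ℝ) : IsClosed (orderSimplex n t) := by
  have hbox : IsClosed {u : Fin n → ℝ | ∀ i, u i ∈ Icc 0 t} := by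
    rw [ofPred_forall]
    exact isClosed_iInter fun i => isClosed_Icc.preimage (continuous_apply i)
  exact hbox.inter isClosed_monotone

theorem isCompact_orderSimplex (n : ℕ) (t : ℝ) : IsCompact (orderSimplex n t) :=
  isCompact_Icc.of_isClosed_subset (isClosed_orderSimplex n t)
    fun _ hu => ⟨fun i => (hu.1 i).1, fun i => (hu.1 i).2⟩

theorem setIntegral_orderSimplex_succ {E : Type*} [NormedAddCommGroup E] [NormedSpace ℝ E]
    {n : ℕ} {t : ℝ} (ht : 0 ≤ t) {F : (Fin (n + 1) → ℝ) → E}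
    (hF : IntegrableOn F (orderSimplex (n + 1) t)) :
    ∫ u in orderSimplex (n + 1) t, F u =
      ∫ s in 0..t, ∫ v in orderSimplex n s, F (Fin.snoc v s) := by
  have hS := (isClosed_orderSimplex (n + 1) t).measurableSet
  have he := (volume_preserving_piFinSuccAbove (fun _ : Fin (n + 1) => ℝ) (Fin.last n)).symm
  have hsnoc : ∀ p : ℝ × (Fin n → ℝ),
      (MeasurableEquiv.piFinSuccAbove (fun _ => ℝ) (Fin.last n)).symm p = Fin.snoc p.2 p.1 := by
    intro p
    simp [MeasurableEquiv.piFinSuccAbove_symm_apply, Fin.snocEquiv]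
  have hslice : ∀ s, ∫ v, (orderSimplex (n + 1) t).indicator F (Fin.snoc v s) =
      (Icc 0 t).indicator (fun s => ∫ v in orderSimplex n s, F (Fin.snoc v s)) s := by
    intro s
    by_cases hs : s ∈ Icc 0 t
    · rw [indicator_of_mem hs, ← integral_indicator (isClosed_orderSimplex n s).measurableSet]
      congr 1 with v
      by_cases hv : v ∈ orderSimplex n s <;> simp [hv, hs, snoc_mem_orderSimplex_iff]
    · simp [snoc_mem_orderSimplex_iff, hs]
  rw [← integral_indicator hS, ← he.integral_comp', Measure.volume_eq_prod, integral_prod]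
  · simp_rw [hsnoc, hslice]
    rw [integral_indicator measurableSet_Icc, integral_Icc_eq_integral_Ioc,
      ← intervalIntegral.integral_of_le ht]
  · exact (he.integrable_comp_emb (MeasurableEquiv.measurableEmbedding _)).mpr
      (hF.integrable_indicator hS)

theorem continuous_list_prod_ofFn_comp {X M : Type*} [TopologicalSpace X] [Monoid M]
    [TopologicalSpace M] [ContinuousMul M] {a : X → M} (ha : Continuous a) (n : ℕ) :
    Continuous fun u : Fin n → X => (List.ofFn fun i => a (u i)).prod := by
  simp only [List.ofFn_eq_map]
  exact continuous_list_prod _ fun i _ => ha.comp (continuous_apply i)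

theorem integrableOn_orderSimplex_list_prod_ofFn {A : Type*} [NormedRing A] {a : ℝ → A}
    (ha : Continuous a) (n : ℕ) (t : ℝ) :
    IntegrableOn (fun u => (List.ofFn fun i => a (u i)).prod) (orderSimplex n t) :=
  (continuous_list_prod_ofFn_comp ha n).continuousOn.integrableOn_compact
    (isCompact_orderSimplex n t)

section Dyson

variable {A : Type*} [NormedRing A] [NormedAlgebra ℝ A]

noncomputable def dysonTerm (a : ℝ → A) : ℕ → ℝ → A
  | 0 => fun _ => 1
  | n + 1 => fun t => ∫ s in 0..t, dysonTerm a n s * a s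

variable {a : ℝ → A}

theorem dysonTerm_zero (a : ℝ → A) (t : ℝ) : dysonTerm a 0 t = 1 := rfl

theorem dysonTerm_succ (a : ℝ → A) (n : ℕ) (t : ℝ) :
    dysonTerm a (n + 1) t = ∫ s in 0..t, dysonTerm a n s * a s := rfl

theorem continuous_dysonTerm (ha : Continuous a) : ∀ n, Continuous (dysonTerm a n)
  | 0 => continuous_const
  | n + 1 => intervalIntegral.continuous_primitive
      (fun _ _ => ((continuous_dysonTerm ha n).mul ha).intervalIntegrable _ _) 0

theorem integral_pow_div_factorial (n : ℕ) (t : ℝ) :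
    ∫ s in 0..t, s ^ n / n ! = t ^ (n + 1) / (n + 1)! := by
  rw [intervalIntegral.integral_div, integral_pow, zero_pow n.succ_ne_zero, sub_zero,
    factorial_succ]
  push_cast
  field_simp

theorem norm_le_of_eq_integral_mul {f : ℕ → ℝ → A} {C M T : ℝ}
    (hf₀ : ∀ t ∈ Icc 0 T, ‖f 0 t‖ ≤ C) (ha : ∀ t ∈ Icc 0 T, ‖a t‖ ≤ M)
    (hf : ∀ n t, f (n + 1) t = ∫ s in 0..t, f n s * a s) :
    ∀ n, ∀ t ∈ Icc 0 T, ‖f n t‖ ≤ C * (M * t) ^ n / n !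
  | 0, t, ht => by simpa using hf₀ t ht
  | n + 1, t, ht => by
    have hC : 0 ≤ C := (norm_nonneg _).trans (hf₀ t ht)
    have hM : 0 ≤ M := (norm_nonneg _).trans (ha t ht)
    have hstep : ∀ᵐ s ∂volume.restrict (uIoc 0 t),
        ‖f n s * a s‖ ≤ C * M ^ (n + 1) * (s ^ n / n !) := by
      refine (ae_restrict_mem measurableSet_uIoc).mono fun s hs => ?_
      rw [uIoc_of_le ht.1] at hs
      have hsT : s ∈ Icc 0 T := ⟨hs.1.le, hs.2.trans ht.2⟩
      have hfs := norm_le_of_eq_integral_mul hf₀ ha hf n s hsT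
      calc ‖f n s * a s‖ ≤ ‖f n s‖ * ‖a s‖ := norm_mul_le _ _
        _ ≤ C * (M * s) ^ n / n ! * M :=
          mul_le_mul hfs (ha s hsT) (norm_nonneg _) ((norm_nonneg _).trans hfs)
        _ = C * M ^ (n + 1) * (s ^ n / n !) := by ring
    calc ‖f (n + 1) t‖ ≤ |∫ s in 0..t, C * M ^ (n + 1) * (s ^ n / n !)| := by
          rw [hf]
          exact intervalIntegral.norm_integral_le_abs_of_norm_le hstep
            (Continuous.intervalIntegrable (by fun_prop) _ _)
      _ = C * (M * t) ^ (n + 1) / (n + 1)! := by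
          have ht₀ := ht.1
          rw [intervalIntegral.integral_const_mul, integral_pow_div_factorial,
            abs_of_nonneg (by positivity)]
          ring

theorem norm_dysonTerm_le {M T : ℝ} (ha : ∀ t ∈ Icc 0 T, ‖a t‖ ≤ M) (n : ℕ) {t : ℝ}
    (ht : t ∈ Icc 0 T) : ‖dysonTerm a n t‖ ≤ ‖(1 : A)‖ * (M * t) ^ n / n ! :=
  norm_le_of_eq_integral_mul (fun _ _ => le_rfl) ha (dysonTerm_succ a) n t ht

theorem summable_norm_dysonTerm (ha : Continuous a) {t : ℝ} (ht : 0 ≤ t) :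
    Summable fun n => ‖dysonTerm a n t‖ := by
  obtain ⟨M, hM⟩ := isCompact_Icc.exists_bound_of_continuousOn (ha.continuousOn (s := Icc 0 t))
  refine .of_nonneg_of_le (fun n => norm_nonneg _)
    (fun n => norm_dysonTerm_le hM n ⟨ht, le_rfl⟩) ?_
  simpa only [mul_div_assoc] using (Real.summable_pow_div_factorial (M * t)).mul_left ‖(1 : A)‖

variable [CompleteSpace A]

theorem setIntegral_orderSimplex_prod_eq_dysonTerm (ha : Continuous a) :
    ∀ (n : ℕ) {t : ℝ}, 0 ≤ t →
      ∫ u in orderSimplex n t, (List.ofFn fun i => a (u i)).prod = dysonTerm a n t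
  | 0, t, _ => by simp [orderSimplex_zero, dysonTerm_zero, volume_pi, measureReal_def]
  | n + 1, t, ht => by
    rw [setIntegral_orderSimplex_succ ht (integrableOn_orderSimplex_list_prod_ofFn ha _ _),
      dysonTerm_succ]
    refine intervalIntegral.integral_congr fun s hs => ?_
    rw [uIcc_of_le ht] at hs
    simp only [List.ofFn_succ', List.prod_concat, Fin.snoc_castSucc, Fin.snoc_last]
    rw [integral_mul_const_of_integrable (integrableOn_orderSimplex_list_prod_ofFn ha n s),
      setIntegral_orderSimplex_prod_eq_dysonTerm ha n hs.1]

theorem sub_sum_range_dysonTerm_succ (ha : Continuous a) {E : ℝ → A}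
    (hE : ∀ t, HasDerivAt E (E t * a t) t) (hE₀ : E 0 = 1) (N : ℕ) (t : ℝ) :
    E t - ∑ n ∈ Finset.range (N + 1), dysonTerm a n t =
      ∫ s in 0..t, (E s - ∑ n ∈ Finset.range N, dysonTerm a n s) * a s := by
  have hEa : Continuous fun s => E s * a s :=
    (continuous_iff_continuousAt.2 fun s => (hE s).continuousAt).mul ha
  have hterm : ∀ n, Continuous fun s => dysonTerm a n s * a s :=
    fun n => (continuous_dysonTerm ha n).mul ha
  have hsum : Continuous fun s => ∑ n ∈ Finset.range N, dysonTerm a n s * a s :=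
    continuous_finsetSum _ fun n _ => hterm n
  have hFTC : E t - 1 = ∫ s in 0..t, E s * a s := by
    rw [intervalIntegral.integral_eq_sub_of_hasDerivAt (fun s _ => hE s)
      (hEa.intervalIntegrable _ _), hE₀]
  simp only [sub_mul, Finset.sum_mul]
  rw [intervalIntegral.integral_sub (hEa.intervalIntegrable _ _) (hsum.intervalIntegrable _ _),
    intervalIntegral.integral_finsetSum fun n _ => (hterm n).intervalIntegrable _ _, ← hFTC,
    Finset.sum_range_succ', dysonTerm_zero]
  simp only [dysonTerm_succ]
  abel

theorem hasSum_dysonTerm (ha : Continuous a) {E : ℝ → A}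
    (hE : ∀ t, HasDerivAt E (E t * a t) t) (hE₀ : E 0 = 1) {t : ℝ} (ht : 0 ≤ t) :
    HasSum (fun n => dysonTerm a n t) (E t) := by
  obtain ⟨M, hM⟩ := isCompact_Icc.exists_bound_of_continuousOn (ha.continuousOn (s := Icc 0 t))
  obtain ⟨C, hC⟩ := isCompact_Icc.exists_bound_of_continuousOn
    ((continuous_iff_continuousAt.2 fun s => (hE s).continuousAt).continuousOn (s := Icc 0 t))
  have hrem (N : ℕ) : ‖E t - ∑ n ∈ Finset.range N, dysonTerm a n t‖ ≤ C * (M * t) ^ N / N ! :=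
    norm_le_of_eq_integral_mul
      (f := fun N s => E s - ∑ n ∈ Finset.range N, dysonTerm a n s) (by simpa using hC) hM
      (sub_sum_range_dysonTerm_succ ha hE hE₀) N t ⟨ht, le_rfl⟩
  rw [hasSum_iff_tendsto_nat_of_summable_norm (summable_norm_dysonTerm ha ht),
    tendsto_iff_norm_sub_tendsto_zero]
  refine squeeze_zero (fun _ => norm_nonneg _) (fun N => (norm_sub_rev _ _).trans_le (hrem N)) ?_
  simpa only [mul_div_assoc, mul_zero] using
    (FloorSemiring.tendsto_pow_div_factorial_atTop (M * t)).const_mul C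

end Dyson

section Exp

variable {A : Type*} [NormedRing A] [NormedAlgebra ℝ A] [CompleteSpace A]

noncomputable def expConj (x y : A) (s : ℝ) : A := exp (s • x) * y * exp (-(s • x))

theorem continuous_exp_smul (x : A) : Continuous fun s : ℝ => exp (s • x) :=
  continuous_iff_continuousAt.2 fun s => (hasDerivAt_exp_smul_const x s).continuousAt

theorem continuous_expConj (x y : A) : Continuous (expConj x y) := by
  have h := continuous_exp_smul (-x)
  simp only [smul_neg] at h
  exact ((continuous_exp_smul x).mul continuous_const).mul h

theorem hasDerivAt_exp_smul_add_mul_exp_neg_smul (x y : A) (t : ℝ) :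
    HasDerivAt (fun s : ℝ => exp (s • (x + y)) * exp (-(s • x)))
      (exp (t • (x + y)) * exp (-(t • x)) * expConj x y t) t := by
  have hneg : HasDerivAt (fun s : ℝ => exp (-(s • x))) (-x * exp (-(t • x))) t := by
    simpa only [smul_neg] using hasDerivAt_exp_smul_const' (-x) t
  refine ((hasDerivAt_exp_smul_const (x + y) t).mul hneg).congr_deriv ?_
  have hinv : exp (-(t • x)) * exp (t • x) = 1 := by
    let _ : NormedAlgebra ℚ A := .restrictScalars ℚ ℝ A
    rw [← exp_add_of_commute (Commute.refl (t • x)).neg_left, neg_add_cancel, exp_zero]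
  symm
  calc exp (t • (x + y)) * exp (-(t • x)) * expConj x y t
      = exp (t • (x + y)) * (exp (-(t • x)) * exp (t • x)) * y * exp (-(t • x)) := by
        simp only [expConj, mul_assoc]
    _ = _ := by rw [hinv]; noncomm_ring

end Exp

/-- Expansional formula: in a unital complex Banach algebra,
`exp(x+y) exp(−x) = Σ_n ∫_{S_n} α_{u_1}(y) ⋯ α_{u_n}(y) du`, where
`α_u(y) = exp(u x) y exp(−u x)`, the `n = 0` term is `1`, and the series converges
absolutely. -/
theorem expansional_formula {A : Type*} [NormedRing A] [NormedAlgebra ℂ A]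
    [CompleteSpace A] (x y : A) :
    Summable (fun n : ℕ => ‖expansionalTerm x y n‖) ∧
    NormedSpace.exp (x + y) * NormedSpace.exp (-x) = ∑' n : ℕ, expansionalTerm x y n := by
  have hterm : ∀ n, expansionalTerm x y n = dysonTerm (expConj x y) n 1 := fun n =>
    setIntegral_orderSimplex_prod_eq_dysonTerm (continuous_expConj x y) n zero_le_one
  have hsum := hasSum_dysonTerm (continuous_expConj x y)
    (hasDerivAt_exp_smul_add_mul_exp_neg_smul x y) (by simp) zero_le_one
  simp only [one_smul, ← hterm] at hsum
  refine ⟨?_, hsum.tsum_eq.symm⟩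
  simpa only [hterm] using summable_norm_dysonTerm (continuous_expConj x y) zero_le_one
end

section
/- Let Y be a compact metrizable topological space and let μ and ν be finite Borel measures on Y that are mutually singular. If T : L²(Y,μ) → L²(Y,ν) is a bounded linear map intertwining the multiplication actions of C(Y), i.e. T(f·ξ) = f·T(ξ) for every continuous function f on Y and every ξ ∈ L²(Y,μ), then T = 0. In other words, the multiplication representations of C(Y) on L²(Y,μ) and L²(Y,ν) are disjoint. -/
/-!
If `μ ⟂ₘ ν` are carried by disjoint sets `Sᶜ` and `S`, regularity and Urysohn's lemma give
continuous `fₙ : Y → [0, 1]` with `fₙ = 1` off sets of small `μ`-measure and `fₙ = 0` off sets of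
small `ν`-measure. For an intertwiner `T` this gives
`‖T ξ‖ ≤ ‖T (fₙ ξ)‖ + ‖T‖ ‖(1 - fₙ) ξ‖ = ‖fₙ T ξ‖ + ‖T‖ ‖(1 - fₙ) ξ‖`,
and both terms tend to `0` by absolute continuity of the integrals of `|ξ|²` and `|T ξ|²`.
-/

open MeasureTheory Filter Set Topology
open scoped ENNReal

namespace MeasureTheory

variable {α E : Type*} {m : MeasurableSpace α} {μ : Measure α}

theorem eLpNorm_mul_le_eLpNorm_indicator {R : Type*} [NormedRing R] {c : α → R} {s : Set α}
    (hc : ∀ x, ‖c x‖ ≤ 1) (hcs : ∀ x ∉ s, c x = 0) (g : α → R) (p : ℝ≥0∞) :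
    eLpNorm (fun x => c x * g x) p μ ≤ eLpNorm (s.indicator g) p μ := by
  refine eLpNorm_mono fun x => ?_
  by_cases hx : x ∈ s
  · rw [indicator_of_mem hx]
    exact (norm_mul_le _ _).trans (mul_le_of_le_one_left (norm_nonneg _) (hc x))
  · simp [hcs x hx]

theorem MemLp.tendsto_eLpNorm_indicator [NormedAddCommGroup E] {p : ℝ≥0∞} (hp : 1 ≤ p)
    (hp_top : p ≠ ∞) {f : α → E} (hf : MemLp f p μ) {ι : Type*} {l : Filter ι} {s : ι → Set α}
    (hs : Tendsto (fun i => μ (s i)) l (𝓝 0)) :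
    Tendsto (fun i => eLpNorm ((s i).indicator f) p μ) l (𝓝 0) := by
  refine ENNReal.tendsto_nhds_zero.2 fun ε hε => ?_
  obtain ⟨r, -, hr, hrε⟩ := ENNReal.lt_iff_exists_real_btwn.1 hε
  obtain ⟨δ, hδ, hδf⟩ := hf.eLpNorm_indicator_le hp hp_top (ENNReal.ofReal_pos.1 hr)
  filter_upwards [ENNReal.tendsto_nhds_zero.1 hs _ (ENNReal.ofReal_pos.2 hδ)] with i hi
  calc eLpNorm ((s i).indicator f) p μ
      ≤ eLpNorm ((toMeasurable μ (s i)).indicator f) p μ :=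
        eLpNorm_mono fun x => norm_indicator_le_of_subset (subset_toMeasurable μ (s i)) f x
    _ ≤ ENNReal.ofReal r :=
        hδf _ (measurableSet_toMeasurable μ (s i)) ((measure_toMeasurable (s i)).trans_le hi)
    _ ≤ ε := hrε.le

end MeasureTheory

namespace MeasureTheory.Measure.MutuallySingular

variable {Y : Type*} [TopologicalSpace Y] [NormalSpace Y] [MeasurableSpace Y]
  [OpensMeasurableSpace Y] {μ ν : Measure Y} [IsFiniteMeasure μ] [μ.WeaklyRegular] [ν.OuterRegular]

theorem exists_continuous_measure_ne_lt (h : μ ⟂ₘ ν) {ε : ℝ≥0∞} (hε : ε ≠ 0) :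
    ∃ f : C(Y, ℝ), (∀ y, f y ∈ Icc 0 1) ∧ μ {y | f y ≠ 1} < ε ∧ ν {y | f y ≠ 0} < ε := by
  set S := h.nullSet
  obtain ⟨F, hFS, hF, hμF⟩ :=
    h.measurableSet_nullSet.compl.exists_isClosed_sdiff_lt (measure_ne_top μ _) hε
  have hνF : ν F < ε := by
    rw [measure_mono_null hFS h.measure_compl_nullSet]
    exact pos_iff_ne_zero.2 hε
  obtain ⟨U, hFU, hU, hνU⟩ := F.exists_isOpen_lt_of_lt ε hνF
  obtain ⟨f, hf0, hf1, hf⟩ := exists_continuous_zero_one_of_isClosed hU.isClosed_compl hF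
    (disjoint_compl_left_iff_subset.2 hFU)
  refine ⟨f, hf, ?_, ?_⟩
  · calc μ {y | f y ≠ 1} ≤ μ Fᶜ := measure_mono fun y hy hyF => hy (hf1 hyF)
      _ = μ (Sᶜ \ F) := by
        rw [← measure_sdiff_null h.measure_nullSet, sdiff_eq, sdiff_eq, inter_comm]
      _ < ε := hμF
  · have hsub : {y | f y ≠ 0} ⊆ U := fun y hy => by_contra fun hyU => hy (hf0 hyU)
    exact (measure_mono hsub).trans_lt hνU

theorem exists_seq_continuous_tendsto_measure_ne (h : μ ⟂ₘ ν) :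
    ∃ f : ℕ → C(Y, ℝ), (∀ n y, f n y ∈ Icc 0 1) ∧
      Tendsto (fun n => μ {y | f n y ≠ 1}) atTop (𝓝 0) ∧
      Tendsto (fun n => ν {y | f n y ≠ 0}) atTop (𝓝 0) := by
  choose f hf hμ hν using fun n : ℕ =>
    h.exists_continuous_measure_ne_lt (ENNReal.inv_ne_zero.2 (ENNReal.natCast_ne_top n))
  have squeeze {a : ℕ → ℝ≥0∞} (ha : ∀ n, a n < (n : ℝ≥0∞)⁻¹) : Tendsto a atTop (𝓝 0) :=
    tendsto_of_tendsto_of_tendsto_of_le_of_le tendsto_const_nhds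
      ENNReal.tendsto_inv_nat_nhds_zero (fun _ => zero_le ..) fun n => (ha n).le
  exact ⟨f, hf, squeeze hμ, squeeze hν⟩

end MeasureTheory.Measure.MutuallySingular

section Intertwining

variable {Y : Type*} [TopologicalSpace Y] [MeasurableSpace Y] [OpensMeasurableSpace Y]
  {p q : ℝ≥0∞} [Fact (1 ≤ p)] [Fact (1 ≤ q)] {μ ν : Measure Y}

theorem enorm_apply_le_of_intertwining (T : Lp ℂ p μ →L[ℂ] Lp ℂ q ν)
    (hT : ∀ (f : C(Y, ℂ)) (ξ η : Lp ℂ p μ),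
      (η : Y → ℂ) =ᵐ[μ] (fun y => f y * (ξ : Y → ℂ) y) →
      (T η : Y → ℂ) =ᵐ[ν] (fun y => f y * (T ξ : Y → ℂ) y))
    (ξ : Lp ℂ p μ) (f : C(Y, ℝ)) (hf : ∀ y, f y ∈ Icc 0 1) :
    ‖T ξ‖ₑ ≤ eLpNorm ({y | f y ≠ 0}.indicator (T ξ)) q ν +
      ‖T‖ₑ * eLpNorm ({y | f y ≠ 1}.indicator ξ) p μ := by
  set g : C(Y, ℂ) := ⟨fun y => f y, by fun_prop⟩
  have hg (y : Y) : ‖g y‖ ≤ 1 := by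
    simpa [g, abs_of_nonneg (hf y).1] using (hf y).2
  have h1g (y : Y) : ‖1 - g y‖ ≤ 1 := by
    rw [show 1 - g y = ((1 - f y : ℝ) : ℂ) by simp [g], Complex.norm_real, Real.norm_eq_abs,
      abs_of_nonneg (sub_nonneg.2 (hf y).2)]
    linarith [(hf y).1]
  have hgξ : MemLp (fun y => g y * ξ y) p μ :=
    (Lp.memLp ξ).of_le (g.continuous.aestronglyMeasurable.mul (Lp.aestronglyMeasurable ξ))
      (ae_of_all _ fun y => by
        simpa only [norm_mul] using mul_le_of_le_one_left (norm_nonneg _) (hg y))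
  set η := hgξ.toLp
  have hTη : ‖T η‖ₑ ≤ eLpNorm ({y | f y ≠ 0}.indicator (T ξ)) q ν := by
    rw [Lp.enorm_def, eLpNorm_congr_ae (hT g ξ η hgξ.coeFn_toLp)]
    exact eLpNorm_mul_le_eLpNorm_indicator hg (fun y hy => by simp_all [g]) _ _
  have hξη : ‖ξ - η‖ₑ ≤ eLpNorm ({y | f y ≠ 1}.indicator ξ) p μ := by
    have : (ξ - η : Lp ℂ p μ) =ᵐ[μ] fun y => (1 - g y) * ξ y := by
      filter_upwards [Lp.coeFn_sub ξ η, hgξ.coeFn_toLp] with y h₁ h₂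
      rw [h₁, Pi.sub_apply, h₂, sub_mul, one_mul]
    rw [Lp.enorm_def, eLpNorm_congr_ae this]
    exact eLpNorm_mul_le_eLpNorm_indicator h1g (fun y hy => by simp_all [g]) _ _
  calc ‖T ξ‖ₑ = ‖T η + T (ξ - η)‖ₑ := by rw [← map_add, add_sub_cancel]
    _ ≤ ‖T η‖ₑ + ‖T‖ₑ * ‖ξ - η‖ₑ := (enorm_add_le _ _).trans (by gcongr; exact T.le_opENorm _)
    _ ≤ _ := by gcongr

end Intertwining

theorem disjoint_representations_of_mutuallySingular_general {Y : Type*} [TopologicalSpace Y]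
    [TopologicalSpace.MetrizableSpace Y] [MeasurableSpace Y] [BorelSpace Y]
    (μ ν : Measure Y) [IsFiniteMeasure μ] [IsFiniteMeasure ν]
    (hsing : μ.MutuallySingular ν)
    (T : Lp ℂ 2 μ →L[ℂ] Lp ℂ 2 ν)
    (hT : ∀ (f : C(Y, ℂ)) (ξ η : Lp ℂ 2 μ),
      (η : Y → ℂ) =ᵐ[μ] (fun y => f y * (ξ : Y → ℂ) y) →
      (T η : Y → ℂ) =ᵐ[ν] (fun y => f y * (T ξ : Y → ℂ) y)) :
    T = 0 := by
  obtain ⟨f, hf, hμ, hν⟩ := hsing.exists_seq_continuous_tendsto_measure_ne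
  ext1 ξ
  have hlim : Tendsto (fun n => eLpNorm ({y | f n y ≠ 0}.indicator (T ξ)) 2 ν +
      ‖T‖ₑ * eLpNorm ({y | f n y ≠ 1}.indicator ξ) 2 μ) atTop (𝓝 0) := by
    simpa using
      ((Lp.memLp (T ξ)).tendsto_eLpNorm_indicator one_le_two ENNReal.ofNat_ne_top hν).add
        (ENNReal.Tendsto.const_mul ((Lp.memLp ξ).tendsto_eLpNorm_indicator one_le_two
          ENNReal.ofNat_ne_top hμ) (Or.inr enorm_ne_top))
  have hbound (n : ℕ) := enorm_apply_le_of_intertwining T hT ξ (f n) (hf n)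
  simpa using ge_of_tendsto' hlim hbound

/-- Let `Y` be a compact metrizable space and `μ`, `ν` finite Borel measures on `Y` that are
mutually singular.  Any bounded linear map `T : L²(Y,μ) → L²(Y,ν)` intertwining the
multiplication actions of `C(Y)` vanishes: the multiplication representations of `C(Y)` on
`L²(Y,μ)` and `L²(Y,ν)` are disjoint. -/
theorem disjoint_representations_of_mutuallySingular {Y : Type*} [TopologicalSpace Y]
    [CompactSpace Y] [TopologicalSpace.MetrizableSpace Y] [MeasurableSpace Y] [BorelSpace Y]
    (μ ν : Measure Y) [IsFiniteMeasure μ] [IsFiniteMeasure ν]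
    (hsing : μ.MutuallySingular ν)
    (T : Lp ℂ 2 μ →L[ℂ] Lp ℂ 2 ν)
    (hT : ∀ (f : C(Y, ℂ)) (ξ η : Lp ℂ 2 μ),
      (η : Y → ℂ) =ᵐ[μ] (fun y => f y * (ξ : Y → ℂ) y) →
      (T η : Y → ℂ) =ᵐ[ν] (fun y => f y * (T ξ : Y → ℂ) y)) :
    T = 0 :=
  disjoint_representations_of_mutuallySingular_general μ ν hsing T hT
end
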